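/- With the same setup (distribution ν on X, true conditional label probability η_*, corrupted conditional probabilities η_t for t in a finite set I with c_t = sup_x |η_*(x) − η_t(x)|), for any two hypotheses h, h' : X → {0,1}: (1/|I|) Σ_{t∈I} [(R_t(h) − R_t(h')) − (R_*(h) − R_*(h'))] ≤ 2·ρ_*(h,h')·(1/|I|)·Σ_{t∈I} c_t, where ρ_*(h,h') = P_{x∼ν}(h(x) ≠ h'(x)). That is, the corruption bias on risk differences is localized to the disagreement region of h and h'. -/
import Mathlib


open MeasureTheory

/-- Conditional risk of hypothesis `h` at point `x` under label probability `η`. -/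
noncomputable def condRisk {X : Type*} (η : X → ℝ) (h : X → Bool) (x : X) : ℝ :=
  η x * (if h x = false then 1 else 0) + (1 - η x) * (if h x = true then 1 else 0)

/-- Risk of `h` under marginal `ν` and conditional label probability `η`. -/
noncomputable def risk {X : Type*} [MeasurableSpace X] (ν : Measure X)
    (η : X → ℝ) (h : X → Bool) : ℝ :=
  ∫ x, condRisk η h x ∂ν

/-- Disagreement mass of two hypotheses under `ν`. -/
noncomputable def disMass {X : Type*} [MeasurableSpace X] (ν : Measure X)
    (h h' : X → Bool) : ℝ :=
  ∫ x, (if h x ≠ h' x then (1 : ℝ) else 0) ∂ν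

theorem corruption_bias_localized_to_disagreement
    {X T : Type*} [MeasurableSpace X] (ν : Measure X) [IsProbabilityMeasure ν]
    (I : Finset T) (hI : I.Nonempty)
    (ηt : T → X → ℝ) (ηs : X → ℝ) (c : T → ℝ)
    (hηs : ∀ x, 0 ≤ ηs x ∧ ηs x ≤ 1)
    (hηt : ∀ t ∈ I, ∀ x, 0 ≤ ηt t x ∧ ηt t x ≤ 1)
    (hc : ∀ t ∈ I, ∀ x, |ηt t x - ηs x| ≤ c t)
    (h h' : X → Bool)
    (hint : ∀ t ∈ I, Integrable (condRisk (ηt t) h) ν)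
    (hint' : ∀ t ∈ I, Integrable (condRisk (ηt t) h') ν)
    (hints : Integrable (condRisk ηs h) ν)
    (hints' : Integrable (condRisk ηs h') ν)
    (hdis : Integrable (fun x => if h x ≠ h' x then (1 : ℝ) else 0) ν) :
    (1 / (I.card : ℝ)) *
        ∑ t ∈ I, ((risk ν (ηt t) h - risk ν (ηt t) h') - (risk ν ηs h - risk ν ηs h'))
      ≤ 2 * disMass ν h h' * ((1 / (I.card : ℝ)) * ∑ t ∈ I, c t) := by
  have key : ∀ t ∈ I,
      (risk ν (ηt t) h - risk ν (ηt t) h') - (risk ν ηs h - risk ν ηs h')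
        ≤ 2 * c t * disMass ν h h' := by
    intro t ht
    have i12 : Integrable (fun x => condRisk (ηt t) h x - condRisk (ηt t) h' x) ν :=
      (hint t ht).sub (hint' t ht)
    have i34 : Integrable (fun x => condRisk ηs h x - condRisk ηs h' x) ν :=
      hints.sub hints'
    have hL : (risk ν (ηt t) h - risk ν (ηt t) h') - (risk ν ηs h - risk ν ηs h')
        = ∫ x, ((condRisk (ηt t) h x - condRisk (ηt t) h' x)
            - (condRisk ηs h x - condRisk ηs h' x)) ∂ν := by
      rw [risk, risk, risk, risk, ← integral_sub (hint t ht) (hint' t ht),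
        ← integral_sub hints hints', ← integral_sub i12 i34]
    have hR : 2 * c t * disMass ν h h'
        = ∫ x, 2 * c t * (if h x ≠ h' x then (1 : ℝ) else 0) ∂ν := by
      rw [disMass, integral_const_mul]
    rw [hL, hR]
    apply integral_mono (i12.sub i34) (hdis.const_mul _)
    intro x
    have h1 := abs_le.mp (hc t ht x)
    have hc0 : 0 ≤ c t := le_trans (abs_nonneg _) (hc t ht x)
    cases hx : h x <;> cases hx' : h' x <;>
      simp [condRisk, hx, hx'] <;> linarith [h1.1, h1.2]
  have hcard : 0 ≤ 1 / (I.card : ℝ) := by positivity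
  have hsum : ∑ t ∈ I, ((risk ν (ηt t) h - risk ν (ηt t) h') - (risk ν ηs h - risk ν ηs h'))
      ≤ ∑ t ∈ I, 2 * c t * disMass ν h h' := Finset.sum_le_sum key
  calc (1 / (I.card : ℝ)) *
        ∑ t ∈ I, ((risk ν (ηt t) h - risk ν (ηt t) h') - (risk ν ηs h - risk ν ηs h'))
      ≤ (1 / (I.card : ℝ)) * ∑ t ∈ I, 2 * c t * disMass ν h h' :=
        mul_le_mul_of_nonneg_left hsum hcard
    _ = 2 * disMass ν h h' * ((1 / (I.card : ℝ)) * ∑ t ∈ I, c t) := by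
        have e : ∑ t ∈ I, 2 * c t * disMass ν h h'
            = (∑ t ∈ I, c t) * (2 * disMass ν h h') := by
          rw [Finset.sum_mul]; exact Finset.sum_congr rfl fun t _ => by ring
        rw [e]; ring
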